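/- Let σ be a permutation of size n with σₙ = n and with k left-to-right maxima. For any 1 ≤ j ≤ k, the number of preimages τ of σ under the bubblesort operator B that have exactly j left-to-right maxima is the binomial coefficient C(k−1, j−1). -/

import Mathlib

/-- One pass of bubblesort on a list of naturals. -/
def bpass : List ℕ → List ℕ
  | [] => []
  | [a] => [a]
  | a :: b :: l => if b < a then b :: bpass (a :: l) else a :: bpass (b :: l)

/-- The identity permutation 1 2 ... n as a list. -/
def idList (n : ℕ) : List ℕ := List.map (· + 1) (List.range n)

/-- `l` is (the word of) a permutation of size `n`, i.e. a rearrangement of 1,...,n. -/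
def IsPermList (n : ℕ) (l : List ℕ) : Prop := l.Perm (idList n)

/-- position `j` of `l` holds a left-to-right maximum. -/
def IsLTRMax (l : List ℕ) (j : ℕ) : Prop :=
  j < l.length ∧ ∀ i < j, l.getD i 0 < l.getD j 0

instance (l : List ℕ) (j : ℕ) : Decidable (IsLTRMax l j) := by
  unfold IsLTRMax; infer_instance

/-- the number of left-to-right maxima of `l`. -/
def ltrCount (l : List ℕ) : ℕ :=
  ((List.range l.length).filter fun j => decide (IsLTRMax l j)).length

/-- the length of the longest suffix of `l` consisting of left-to-right maxima. -/
def suffLen (l : List ℕ) : ℕ :=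
  ((List.range l.length).takeWhile fun j => decide (IsLTRMax l (l.length - 1 - j))).length

/-- `σ` is a node of the tree `T(π)` of iterated bubblesort preimages. -/
def IsNode (n : ℕ) (π σ : List ℕ) : Prop :=
  IsPermList n σ ∧ ∃ j, bpass^[j] σ = π

/-- `σ` is a node of `T(π)` at height `j` (j passes needed to reach π, and no fewer). -/
def IsNodeAt (n : ℕ) (π σ : List ℕ) (j : ℕ) : Prop :=
  IsPermList n σ ∧ bpass^[j] σ = π ∧ ∀ i < j, bpass^[i] σ ≠ π

/-- `τ` is a leaf: it has no child, i.e. no bubblesort preimage other than itself. -/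
def IsLeafNode (n : ℕ) (τ : List ℕ) : Prop :=
  ¬ ∃ ρ, IsPermList n ρ ∧ ρ ≠ τ ∧ bpass ρ = τ

/-- `T(π)` and `T(τ)` are isomorphic as rooted trees: there is a bijection between
their node sets sending root to root and commuting with the parent map `bpass`. -/
def TreeIso (n : ℕ) (π τ : List ℕ) : Prop :=
  ∃ φ : List ℕ → List ℕ,
    (∀ σ, IsNode n π σ → IsNode n τ (φ σ)) ∧
    (∀ σ σ', IsNode n π σ → IsNode n π σ' → φ σ = φ σ' → σ = σ') ∧
    (∀ ρ, IsNode n τ ρ → ∃ σ, IsNode n π σ ∧ φ σ = ρ) ∧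
    φ π = τ ∧
    (∀ σ, IsNode n π σ → σ ≠ π → φ (bpass σ) = bpass (φ σ))

/-!
If `a` exceeds every entry of `σ`, then `B(τ₁ a τ₂) = B(τ₁) τ₂ a`, so the preimages of `σ a`
are exactly the words `τ a σ_{>m}` with `τ` a preimage of the prefix `σ_{≤m}`, and the inserted
`a` adds one left-to-right maximum. Hence the number of preimages of `σ a` with `j + 1` maxima is
`S(σ, j) = ∑ₘ N(σ_{≤m}, j)`, where `N(π, j)` counts the preimages of `π` with `j` maxima.
Since the last entry of `B(τ)` is the maximum of `τ`, a nonempty prefix contributes only when it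
ends in a left-to-right maximum of `σ`. Appending such a maximum `c` to `σ` gives
`S(σ c, j) = S(σ, j) + S(σ, j - 1)`, and appending any other entry leaves `S` unchanged; by
Pascal's rule `S(σ, j) = C(ltr σ, j)`.
-/

open Finset

theorem bpass_perm (l : List ℕ) : (bpass l).Perm l := by
  induction l using bpass.induct with
  | case1 | case2 => simp [bpass]
  | case3 a b l h ih =>
    rw [bpass, if_pos h]
    exact (ih.cons b).trans (.swap a b l)
  | case4 a b l h ih =>
    rw [bpass, if_neg h]
    exact ih.cons a

theorem bpass_length (l : List ℕ) : (bpass l).length = l.length :=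
  (bpass_perm l).length_eq

theorem bpass_eq_nil_iff {l : List ℕ} : bpass l = [] ↔ l = [] := by
  rw [← List.length_eq_zero_iff, bpass_length, List.length_eq_zero_iff]

theorem bpass_cons_of_forall_lt {a : ℕ} {l : List ℕ} (h : ∀ x ∈ l, x < a) :
    bpass (a :: l) = l ++ [a] := by
  induction l with
  | nil => simp [bpass]
  | cons b l ih =>
    rw [bpass, if_pos (h b List.mem_cons_self), ih fun x hx => h x (List.mem_cons_of_mem b hx)]
    rfl

theorem bpass_append_cons_of_forall_lt {l₁ l₂ : List ℕ} {a : ℕ}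
    (h₁ : ∀ x ∈ l₁, x < a) (h₂ : ∀ x ∈ l₂, x < a) :
    bpass (l₁ ++ a :: l₂) = bpass l₁ ++ l₂ ++ [a] := by
  induction l₁ using bpass.induct with
  | case1 => simpa [bpass] using bpass_cons_of_forall_lt h₂
  | case2 c =>
    have hc : ¬ a < c := Nat.not_lt.2 (h₁ c (List.mem_singleton_self c)).le
    simp only [List.singleton_append, bpass, if_neg hc, bpass_cons_of_forall_lt h₂]
    rfl
  | case3 c d l h ih | case4 c d l h ih =>
    simp only [List.cons_append, bpass, h, if_true, if_false]
    rw [← List.cons_append, ih fun x hx => h₁ x (by grind)]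

theorem le_of_bpass_eq_append_singleton {l l' : List ℕ} {c : ℕ} (h : bpass l = l' ++ [c]) :
    ∀ x ∈ l, x ≤ c := by
  induction l using bpass.induct generalizing l' with
  | case1 => simp [bpass] at h
  | case2 a =>
    have : a = c := by simpa [bpass] using congrArg List.getLast? h
    simp [this]
  | case3 a b l hlt ih | case4 a b l hlt ih =>
    simp only [bpass, hlt, if_true, if_false, List.cons_eq_append_iff] at h
    rcases h with ⟨-, h⟩ | ⟨l'', -, h⟩
    · simpa [bpass_length] using congrArg List.length h
    · have hle := ih h
      have := hle _ List.mem_cons_self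
      grind

theorem isLTRMax_append_singleton_iff {l : List ℕ} {c j : ℕ} (hj : j < l.length) :
    IsLTRMax (l ++ [c]) j ↔ IsLTRMax l j := by
  have hget : ∀ i < l.length, (l ++ [c]).getD i 0 = l.getD i 0 := fun i hi =>
    List.getD_append _ _ _ _ hi
  simp only [IsLTRMax, List.length_append, List.length_singleton]
  refine ⟨fun ⟨_, h⟩ => ⟨hj, fun i hi => ?_⟩, fun ⟨_, h⟩ => ⟨by omega, fun i hi => ?_⟩⟩
  · simpa only [hget i (hi.trans hj), hget j hj] using h i hi
  · simpa only [hget i (hi.trans hj), hget j hj] using h i hi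

theorem isLTRMax_append_singleton_length_iff {l : List ℕ} {c : ℕ} :
    IsLTRMax (l ++ [c]) l.length ↔ ∀ x ∈ l, x < c := by
  simp only [IsLTRMax, List.length_append, List.length_singleton, Nat.lt_add_one, true_and,
    List.forall_mem_iff_getElem]
  refine forall₂_congr fun i hi => ?_
  simp [List.getD_eq_getElem?_getD, List.getElem?_append_left hi, hi]

theorem ltrCount_append_singleton (l : List ℕ) (c : ℕ) :
    ltrCount (l ++ [c]) = ltrCount l + if ∀ x ∈ l, x < c then 1 else 0 := by
  rw [ltrCount, List.length_append, List.length_singleton, List.range_succ, List.filter_append,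
    List.length_append, List.filter_congr (q := fun j => decide (IsLTRMax l j)) fun j hj =>
      decide_eq_decide.2 (isLTRMax_append_singleton_iff (List.mem_range.1 hj))]
  simp only [List.filter_cons, List.filter_nil, isLTRMax_append_singleton_length_iff,
    decide_eq_true_eq]
  split_ifs <;> rfl

theorem ltrCount_pos {l : List ℕ} (hl : l ≠ []) : 0 < ltrCount l :=
  List.length_pos_of_mem (a := 0) (by simp [IsLTRMax, List.length_pos_iff.2 hl])

theorem ltrCount_append_cons_of_forall_lt {l₁ l₂ : List ℕ} {a : ℕ}
    (h₁ : ∀ x ∈ l₁, x < a) (h₂ : ∀ x ∈ l₂, x < a) :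
    ltrCount (l₁ ++ a :: l₂) = ltrCount l₁ + 1 := by
  induction l₂ using List.reverseRecOn with
  | nil => rw [ltrCount_append_singleton, if_pos h₁]
  | append_singleton l d ih =>
    have hd : ¬ ∀ x ∈ l₁ ++ a :: l, x < d := fun h =>
      (h₂ d (by simp)).asymm (h a (by simp))
    rw [← List.cons_append, ← List.append_assoc, ltrCount_append_singleton, if_neg hd,
      ih fun x hx => h₂ x (List.mem_append_left _ hx), add_zero]

def bpassPreimages (π : List ℕ) (j : ℕ) : Finset (List ℕ) :=
  π.permutations.toFinset.filter fun τ => bpass τ = π ∧ ltrCount τ = j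

@[simp]
theorem mem_bpassPreimages {π τ : List ℕ} {j : ℕ} :
    τ ∈ bpassPreimages π j ↔ bpass τ = π ∧ ltrCount τ = j := by
  simp only [bpassPreimages, mem_filter, List.mem_toFinset, List.mem_permutations,
    and_iff_right_iff_imp]
  rintro ⟨rfl, -⟩
  exact (bpass_perm τ).symm

theorem bpassPreimages_nil (j : ℕ) : bpassPreimages [] j = if j = 0 then {[]} else ∅ := by
  ext τ
  split_ifs with hj <;> simp only [mem_bpassPreimages, bpass_eq_nil_iff, hj, mem_singleton,
    notMem_empty, iff_false, not_and, and_iff_left_iff_imp]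
  all_goals rintro rfl
  exacts [rfl, Ne.symm hj]

theorem bpassPreimages_zero {π : List ℕ} (hπ : π ≠ []) : bpassPreimages π 0 = ∅ := by
  ext τ
  simp only [mem_bpassPreimages, Finset.notMem_empty, iff_false, not_and]
  intro hb
  exact (ltrCount_pos fun hτ => hπ (by rw [← hb, hτ, bpass_eq_nil_iff])).ne'

theorem bpassPreimages_append_singleton_of_lt {l : List ℕ} {c x : ℕ} (hx : x ∈ l) (hc : c < x)
    (j : ℕ) : bpassPreimages (l ++ [c]) j = ∅ := by
  ext τ
  simp only [mem_bpassPreimages, Finset.notMem_empty, iff_false, not_and]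
  intro h _
  have hxτ : x ∈ τ := (bpass_perm τ).subset (h ▸ List.mem_append_left _ hx)
  exact hc.not_ge (le_of_bpass_eq_append_singleton h x hxτ)

theorem forall_lt_of_bpass_eq_take {σ τ : List ℕ} {a m : ℕ} (ha : ∀ x ∈ σ, x < a)
    (h : bpass τ = σ.take m) : ∀ x ∈ τ, x < a := fun x hx =>
  ha x (List.mem_of_mem_take (h ▸ (bpass_perm τ).symm.subset hx))

theorem bpassPreimages_append_singleton_succ {σ : List ℕ} {a : ℕ} (ha : ∀ x ∈ σ, x < a)
    (j : ℕ) : bpassPreimages (σ ++ [a]) (j + 1) = (range (σ.length + 1)).biUnion fun m =>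
      (bpassPreimages (σ.take m) j).image (· ++ a :: σ.drop m) := by
  ext τ
  simp only [mem_biUnion, mem_image, mem_bpassPreimages, mem_range]
  constructor
  · rintro ⟨hb, hc⟩
    have hperm : τ.Perm (a :: σ) :=
      (hb ▸ (bpass_perm τ).symm).trans (List.perm_append_singleton a σ)
    obtain ⟨t₁, t₂, rfl⟩ := List.append_of_mem (hperm.symm.subset List.mem_cons_self)
    have hσ : (t₁ ++ t₂).Perm σ := (List.perm_middle.symm.trans hperm).cons_inv
    have h₁ : ∀ x ∈ t₁, x < a := fun x hx => ha x (hσ.subset (List.mem_append_left _ hx))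
    have h₂ : ∀ x ∈ t₂, x < a := fun x hx => ha x (hσ.subset (List.mem_append_right _ hx))
    rw [bpass_append_cons_of_forall_lt h₁ h₂] at hb
    have hsplit : bpass t₁ ++ t₂ = σ := List.append_cancel_right hb
    rw [ltrCount_append_cons_of_forall_lt h₁ h₂, Nat.add_right_cancel_iff] at hc
    refine ⟨t₁.length, ?_, t₁, ⟨?_, hc⟩, ?_⟩
    · simp [← hsplit, bpass_length]
    · rw [← hsplit, ← bpass_length t₁, List.take_left]
    · rw [← hsplit, ← bpass_length t₁, List.drop_left]
  · rintro ⟨m, -, τL, ⟨hb, hc⟩, rfl⟩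
    have hL := forall_lt_of_bpass_eq_take ha hb
    have hR : ∀ x ∈ σ.drop m, x < a := fun x hx => ha x (List.mem_of_mem_drop hx)
    rw [bpass_append_cons_of_forall_lt hL hR, ltrCount_append_cons_of_forall_lt hL hR, hb, hc,
      List.take_append_drop]
    exact ⟨rfl, rfl⟩

theorem card_bpassPreimages_append_singleton_succ {σ : List ℕ} {a : ℕ} (ha : ∀ x ∈ σ, x < a)
    (j : ℕ) : #(bpassPreimages (σ ++ [a]) (j + 1)) =
      ∑ m ∈ range (σ.length + 1), #(bpassPreimages (σ.take m) j) := by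
  rw [bpassPreimages_append_singleton_succ ha, card_biUnion]
  · exact sum_congr rfl fun m _ => card_image_of_injective _ (List.append_left_injective _)
  intro m hm m' hm' hne
  simp only [Function.onFun, disjoint_left, mem_image, mem_bpassPreimages, not_exists, not_and]
  rintro _ ⟨τL, ⟨hb, -⟩, rfl⟩ τL' ⟨hb', -⟩ heq
  have hidx : ∀ {k τ}, k ∈ (range (σ.length + 1) : Set ℕ) → bpass τ = σ.take k →
      (τ ++ a :: σ.drop k).idxOf a = k := by
    intro k τ hk h
    have hlen : τ.length = k := by
      simp only [coe_range, Set.mem_Iio] at hk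
      rw [← bpass_length, h, List.length_take]; omega
    rw [List.idxOf_append_of_notMem fun haτ => (forall_lt_of_bpass_eq_take ha h a haτ).false,
      List.idxOf_cons_self, hlen, add_zero]
  exact hne (by rw [← hidx hm hb, ← heq, hidx hm' hb'])

theorem sum_card_bpassPreimages_take {σ : List ℕ} (hσ : σ.Nodup) (i : ℕ) :
    ∑ m ∈ range (σ.length + 1), #(bpassPreimages (σ.take m) i) = (ltrCount σ).choose i := by
  induction σ using List.reverseRecOn generalizing i with
  | nil => cases i <;> simp [bpassPreimages_nil, ltrCount]
  | append_singleton σ c ih =>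
    specialize ih (hσ.sublist (List.sublist_append_left σ [c]))
    have hprefix : ∀ m ∈ range (σ.length + 1),
        #(bpassPreimages ((σ ++ [c]).take m) i) = #(bpassPreimages (σ.take m) i) := fun m hm => by
      rw [List.take_append_of_le_length (Nat.lt_succ_iff.1 (mem_range.1 hm))]
    rw [List.length_append, List.length_singleton, sum_range_succ, sum_congr rfl hprefix, ih,
      List.take_of_length_le (by simp), ltrCount_append_singleton]
    by_cases hmax : ∀ x ∈ σ, x < c
    · rw [if_pos hmax]
      cases i with
      | zero => simp [bpassPreimages_zero]
      | succ i =>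
        rw [card_bpassPreimages_append_singleton_succ hmax, ih, Nat.choose_succ_succ', add_comm]
    · obtain ⟨x, hx, hcx⟩ := not_forall₂.1 hmax
      have hne : c ≠ x := fun h => (List.nodup_append.1 hσ).2.2 x hx c (by simp) h.symm
      have hlt : c < x := lt_of_le_of_ne (not_lt.1 hcx) hne
      rw [if_neg hmax, bpassPreimages_append_singleton_of_lt hx hlt, card_empty, add_zero,
        add_zero]

theorem IsPermList.nodup {n : ℕ} {l : List ℕ} (h : IsPermList n l) : l.Nodup :=
  h.nodup_iff.2 (List.nodup_range.map (add_left_injective 1))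

theorem IsPermList.le {n x : ℕ} {l : List ℕ} (h : IsPermList n l) (hx : x ∈ l) : x ≤ n := by
  obtain ⟨y, hy, rfl⟩ := List.mem_map.1 (h.subset hx)
  exact List.mem_range.1 hy

theorem stmt_4_general (n k j : ℕ) (σ : List ℕ) (hσ : IsPermList n σ)
    (hlast : σ.getLast? = some n) (hk : ltrCount σ = k) (hj1 : 1 ≤ j) :
    Set.ncard {τ : List ℕ | IsPermList n τ ∧ bpass τ = σ ∧ ltrCount τ = j} =
      Nat.choose (k - 1) (j - 1) := by
  obtain ⟨σ, rfl⟩ := List.getLast?_eq_some_iff.1 hlast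
  have hnd := hσ.nodup
  have hmax : ∀ x ∈ σ, x < n := fun x hx => lt_of_le_of_ne (hσ.le (List.mem_append_left _ hx))
    fun h => (List.nodup_append.1 hnd).2.2 x hx n (by simp) h
  have hpre : {τ | IsPermList n τ ∧ bpass τ = σ ++ [n] ∧ ltrCount τ = j} =
      bpassPreimages (σ ++ [n]) j := by
    ext τ
    simpa using fun hb _ => (hb ▸ bpass_perm τ).symm.trans hσ
  obtain ⟨j, rfl⟩ : ∃ i, j = i + 1 := ⟨j - 1, by omega⟩
  rw [hpre, Set.ncard_coe_finset, card_bpassPreimages_append_singleton_succ hmax,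
    sum_card_bpassPreimages_take (hnd.sublist (List.sublist_append_left σ [n])), ← hk,
    ltrCount_append_singleton, if_pos hmax, Nat.add_sub_cancel, Nat.add_sub_cancel]

/-- For `σ` of size `n` with `σₙ = n` and `k` left-to-right maxima, and `1 ≤ j ≤ k`,
the number of bubblesort preimages of `σ` with exactly `j` left-to-right maxima
is the binomial coefficient `C(k-1, j-1)`. -/
theorem stmt_4 (n k j : ℕ) (σ : List ℕ) (hσ : IsPermList n σ)
    (hlast : σ.getLast? = some n) (hk : ltrCount σ = k) (hj1 : 1 ≤ j) (hjk : j ≤ k) :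
    Set.ncard {τ : List ℕ | IsPermList n τ ∧ bpass τ = σ ∧ ltrCount τ = j} =
      Nat.choose (k - 1) (j - 1) :=
  stmt_4_general n k j σ hσ hlast hk hj1
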